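/- Let (H,R,χ) be a Cartier triangular Hopf algebra. Then τ(S⊗S)(χ) = χ, i.e. writing χ = χⁱ⊗χᵢ one has S(χᵢ)⊗S(χⁱ) = χⁱ⊗χᵢ. -/

import Mathlib

open scoped TensorProduct

noncomputable section

variable (k H : Type*) [CommRing k] [Ring H] [HopfAlgebra k H]

/-- leg embedding `a ⊗ b ↦ a ⊗ b ⊗ 1` into `H ⊗ (H ⊗ H)`. -/
def leg12 : H ⊗[k] H →ₐ[k] H ⊗[k] (H ⊗[k] H) :=
  Algebra.TensorProduct.map (AlgHom.id k H) Algebra.TensorProduct.includeLeft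

/-- leg embedding `a ⊗ b ↦ 1 ⊗ a ⊗ b`. -/
def leg23 : H ⊗[k] H →ₐ[k] H ⊗[k] (H ⊗[k] H) :=
  Algebra.TensorProduct.includeRight

/-- leg embedding `a ⊗ b ↦ a ⊗ 1 ⊗ b`. -/
def leg13 : H ⊗[k] H →ₐ[k] H ⊗[k] (H ⊗[k] H) :=
  Algebra.TensorProduct.map (AlgHom.id k H) Algebra.TensorProduct.includeRight

/-- `(Id ⊗ Δ)` as an algebra map `H ⊗ H → H ⊗ (H ⊗ H)`. -/
def idComul : H ⊗[k] H →ₐ[k] H ⊗[k] (H ⊗[k] H) :=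
  Algebra.TensorProduct.map (AlgHom.id k H) (Bialgebra.comulAlgHom k H)

/-- `(Δ ⊗ Id)` as an algebra map `H ⊗ H → H ⊗ (H ⊗ H)` (after reassociation). -/
def comulId : H ⊗[k] H →ₐ[k] H ⊗[k] (H ⊗[k] H) :=
  (Algebra.TensorProduct.assoc k k k H H H).toAlgHom.comp
    (Algebra.TensorProduct.map (Bialgebra.comulAlgHom k H) (AlgHom.id k H))

/-- the flip `a ⊗ b ↦ b ⊗ a` as an algebra map. -/
def swapT : H ⊗[k] H →ₐ[k] H ⊗[k] H := (Algebra.TensorProduct.comm k H H).toAlgHom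

/-- A quasitriangular structure on the bialgebra `H`. -/
structure QT where
  R : H ⊗[k] H
  Rinv : H ⊗[k] H
  mul_inv : R * Rinv = 1
  inv_mul : Rinv * R = 1
  quasi_cocomm : ∀ h : H, swapT k H (Coalgebra.comul (R := k) h) * R = R * Coalgebra.comul (R := k) h
  hex1 : idComul k H R = leg13 k H R * leg12 k H R
  hex2 : comulId k H R = leg13 k H R * leg23 k H R

/-- A pre-Cartier quasitriangular bialgebra structure on `H`. -/
structure PreCartier extends QT k H where
  χ : H ⊗[k] H
  chi_comm : ∀ h : H, χ * Coalgebra.comul (R := k) h = Coalgebra.comul (R := k) h * χ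
  chi_hex1 : idComul k H χ = leg12 k H χ + leg12 k H Rinv * leg13 k H χ * leg12 k H R
  chi_hex2 : comulId k H χ = leg23 k H χ + leg23 k H Rinv * leg13 k H χ * leg23 k H R

/-!
Apply `a ⊗ b ⊗ c ↦ a S(b) ⊗ c` to `(Δ ⊗ id)χ = χ₂₃ + R₂₃⁻¹χ₁₃R₂₃`: the left side collapses to
`1 ⊗ (ε ⊗ id)χ = 0`, so `(S ⊗ id)χ` is expressed through `(S ⊗ id)R = R⁻¹` and a product in
`Hᵐᵒᵖ ⊗ H`. Applying `id ⊗ S` and using `(id ⊗ Δ)χ = χ₁₂ + R₁₂⁻¹χ₁₃R₁₂` in the same way yields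
`(S ⊗ S)χ = RχR⁻¹`. Triangularity `τR = R⁻¹` and the Cartier condition `τχ = RχR⁻¹` then give
`τ(S ⊗ S)χ = R⁻¹(RχR⁻¹)R = χ`.
-/

open TensorProduct HopfAlgebra

local notation "𝑺" => (antipode k : H →ₗ[k] H)
local notation "ε" => (Coalgebra.counit : H →ₗ[k] k)
local notation "Δ" => (Coalgebra.comul : H →ₗ[k] H ⊗[k] H)

namespace Cartier

def counitLeft (A : Type*) [Semiring A] [Algebra k A] : H ⊗[k] A →ₐ[k] A :=
  (Algebra.TensorProduct.lid k A).toAlgHom.comp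
    (Algebra.TensorProduct.map (Bialgebra.counitAlgHom k H) (AlgHom.id k A))

def counitRight (A : Type*) [Semiring A] [Algebra k A] : A ⊗[k] H →ₐ[k] A :=
  (Algebra.TensorProduct.rid k k A).toAlgHom.comp
    (Algebra.TensorProduct.map (AlgHom.id k A) (Bialgebra.counitAlgHom k H))

def counitThird : H ⊗[k] (H ⊗[k] H) →ₐ[k] H ⊗[k] H :=
  Algebra.TensorProduct.map (AlgHom.id k H) (counitRight k H H)

def mulAntipode₁₂ : H ⊗[k] (H ⊗[k] H) →ₗ[k] H ⊗[k] H :=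
  (LinearMap.mul' k H ∘ₗ 𝑺.lTensor H).rTensor H ∘ₗ
    (TensorProduct.assoc k H H H).symm.toLinearMap

def mulAntipode₂₃ : H ⊗[k] (H ⊗[k] H) →ₗ[k] H ⊗[k] H :=
  (LinearMap.mul' k H ∘ₗ 𝑺.lTensor H).lTensor H

/-- The product of `Hᵐᵒᵖ ⊗ H`, transported to `H ⊗ H`. -/
def mulOpFst : H ⊗[k] H →ₗ[k] H ⊗[k] H →ₗ[k] H ⊗[k] H :=
  TensorProduct.map₂ (LinearMap.mul k H).flip (LinearMap.mul k H)

variable {k H}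

@[simp] lemma counitLeft_tmul {A : Type*} [Semiring A] [Algebra k A] (a : H) (x : A) :
    counitLeft k H A (a ⊗ₜ x) = ε a • x := rfl

@[simp] lemma counitRight_tmul {A : Type*} [Semiring A] [Algebra k A] (x : A) (a : H) :
    counitRight k H A (x ⊗ₜ a) = ε a • x := rfl

@[simp] lemma counitThird_tmul (a : H) (w : H ⊗[k] H) :
    counitThird k H (a ⊗ₜ w) = a ⊗ₜ counitRight k H H w := rfl

@[simp] lemma mulAntipode₁₂_tmul (a b c : H) :
    mulAntipode₁₂ k H (a ⊗ₜ (b ⊗ₜ c)) = (a * 𝑺 b) ⊗ₜ c := rfl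

@[simp] lemma mulAntipode₂₃_tmul (a b c : H) :
    mulAntipode₂₃ k H (a ⊗ₜ (b ⊗ₜ c)) = a ⊗ₜ (b * 𝑺 c) := rfl

@[simp] lemma mulOpFst_tmul (a b c d : H) :
    mulOpFst k H (a ⊗ₜ b) (c ⊗ₜ d) = (c * a) ⊗ₜ (b * d) := rfl

lemma counitLeft_comul (a : H) : counitLeft k H H (Δ a) = a := by
  have h : (counitLeft k H H).toLinearMap =
      (TensorProduct.lid k H).toLinearMap ∘ₗ LinearMap.rTensor H ε := by
    ext; simp
  rw [← AlgHom.toLinearMap_apply, h, LinearMap.comp_apply, Coalgebra.rTensor_counit_comul]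
  simp

lemma counitRight_comul (a : H) : counitRight k H H (Δ a) = a := by
  have h : (counitRight k H H).toLinearMap =
      (TensorProduct.rid k H).toLinearMap ∘ₗ LinearMap.lTensor H ε := by
    ext; simp
  rw [← AlgHom.toLinearMap_apply, h, LinearMap.comp_apply, Coalgebra.lTensor_counit_comul]
  simp

lemma counitLeft_leg23 (w : H ⊗[k] H) : counitLeft k H (H ⊗[k] H) (leg23 k H w) = w := by
  simp [leg23]

lemma counitLeft_leg13 (w : H ⊗[k] H) :
    counitLeft k H (H ⊗[k] H) (leg13 k H w) = 1 ⊗ₜ counitLeft k H H w := by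
  induction w with
  | zero => simp
  | tmul a b => simp [leg13, tmul_smul]
  | add u v hu hv => simp only [map_add, hu, hv, tmul_add]

lemma counitLeft_comulId (w : H ⊗[k] H) : counitLeft k H (H ⊗[k] H) (comulId k H w) = w := by
  induction w with
  | zero => simp
  | tmul a b =>
    have h (u : H ⊗[k] H) : counitLeft k H (H ⊗[k] H) (Algebra.TensorProduct.assoc k k k H H H
        (u ⊗ₜ b)) = counitLeft k H H u ⊗ₜ b := by
      induction u with
      | zero => simp
      | tmul x y => simp [smul_tmul]
      | add u v hu hv => simp only [add_tmul, map_add, hu, hv]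
    exact (h (Δ a)).trans (by rw [counitLeft_comul])
  | add u v hu hv => simp only [map_add, hu, hv]

lemma counitThird_leg12 (w : H ⊗[k] H) : counitThird k H (leg12 k H w) = w := by
  induction w with
  | zero => simp
  | tmul a b => simp [leg12]
  | add u v hu hv => simp only [map_add, hu, hv]

lemma counitThird_leg13 (w : H ⊗[k] H) :
    counitThird k H (leg13 k H w) = counitRight k H H w ⊗ₜ 1 := by
  induction w with
  | zero => simp
  | tmul a b => simp [leg13, smul_tmul]
  | add u v hu hv => simp only [map_add, hu, hv, add_tmul]

lemma counitThird_idComul (w : H ⊗[k] H) : counitThird k H (idComul k H w) = w := by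
  induction w with
  | zero => simp
  | tmul a b => exact congrArg (a ⊗ₜ ·) (counitRight_comul b)
  | add u v hu hv => simp only [map_add, hu, hv]


lemma mulAntipode₁₂_comulId (w : H ⊗[k] H) :
    mulAntipode₁₂ k H (comulId k H w) = 1 ⊗ₜ counitLeft k H H w := by
  induction w with
  | zero => simp
  | tmul a b =>
    change (LinearMap.mul' k H ∘ₗ 𝑺.lTensor H).rTensor H
      ((TensorProduct.assoc k H H H).symm (TensorProduct.assoc k H H H (Δ a ⊗ₜ b))) = _
    rw [LinearEquiv.symm_apply_apply, LinearMap.rTensor_tmul, LinearMap.comp_apply,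
      mul_antipode_lTensor_comul_apply]
    simp [Algebra.algebraMap_eq_smul_one, smul_tmul]
  | add u v hu hv => simp only [map_add, hu, hv, tmul_add]

lemma mulAntipode₁₂_leg23 (w : H ⊗[k] H) : mulAntipode₁₂ k H (leg23 k H w) = 𝑺.rTensor H w := by
  induction w with
  | zero => simp
  | tmul a b => simp [leg23]
  | add u v hu hv => simp only [map_add, hu, hv]

lemma mulAntipode₁₂_leg13_mul_leg23 (u v : H ⊗[k] H) :
    mulAntipode₁₂ k H (leg13 k H u * leg23 k H v) = u * 𝑺.rTensor H v := by
  induction u with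
  | zero => simp
  | tmul a b =>
    induction v with
    | zero => simp
    | tmul c d => simp [leg13, leg23]
    | add v v' hv hv' => simp only [map_add, mul_add, hv, hv']
  | add u u' hu hu' => simp only [map_add, add_mul, hu, hu']

lemma mulAntipode₁₂_leg23_mul (u : H ⊗[k] H) (X : H ⊗[k] (H ⊗[k] H)) :
    mulAntipode₁₂ k H (leg23 k H u * X) =
      mulOpFst k H (𝑺.rTensor H u) (mulAntipode₁₂ k H X) := by
  induction u with
  | zero => simp
  | tmul a b =>
    induction X with
    | zero => simp
    | tmul x w =>
      induction w with
      | zero => simp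
      | tmul y z => simp [leg23, antipode_mul_antidistrib, mul_assoc]
      | add w w' hw hw' => simp only [tmul_add, map_add, mul_add, hw, hw']
    | add X X' hX hX' => simp only [map_add, mul_add, hX, hX']
  | add u u' hu hu' => simp only [map_add, add_mul, LinearMap.add_apply, hu, hu']

lemma mulAntipode₂₃_idComul (w : H ⊗[k] H) :
    mulAntipode₂₃ k H (idComul k H w) = counitRight k H H w ⊗ₜ 1 := by
  induction w with
  | zero => simp
  | tmul a b =>
    change a ⊗ₜ LinearMap.mul' k H (𝑺.lTensor H (Δ b)) = _
    rw [mul_antipode_lTensor_comul_apply]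
    simp [Algebra.algebraMap_eq_smul_one, smul_tmul]
  | add u v hu hv => simp only [map_add, hu, hv, add_tmul]

lemma mulAntipode₂₃_leg12 (w : H ⊗[k] H) : mulAntipode₂₃ k H (leg12 k H w) = w := by
  induction w with
  | zero => simp
  | tmul a b => simp [leg12]
  | add u v hu hv => simp only [map_add, hu, hv]

lemma mulAntipode₂₃_leg12_mul (u : H ⊗[k] H) (X : H ⊗[k] (H ⊗[k] H)) :
    mulAntipode₂₃ k H (leg12 k H u * X) = u * mulAntipode₂₃ k H X := by
  induction u with
  | zero => simp
  | tmul a b =>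
    induction X with
    | zero => simp
    | tmul x w =>
      induction w with
      | zero => simp
      | tmul y z => simp [leg12, mul_assoc]
      | add w w' hw hw' => simp only [tmul_add, map_add, mul_add, hw, hw']
    | add X X' hX hX' => simp only [map_add, mul_add, hX, hX']
  | add u u' hu hu' => simp only [map_add, add_mul, hu, hu']

lemma mulAntipode₂₃_leg13_mul_leg12 (x v : H ⊗[k] H) :
    mulAntipode₂₃ k H (leg13 k H x * leg12 k H v) = mulOpFst k H v (𝑺.lTensor H x) := by
  induction x with
  | zero => simp
  | tmul a b =>
    induction v with
    | zero => simp
    | tmul c d => simp [leg13, leg12]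
    | add v v' hv hv' => simp only [map_add, mul_add, LinearMap.add_apply, hv, hv']
  | add x x' hx hx' => simp only [map_add, add_mul, hx, hx']

lemma lTensor_antipode_mulOpFst (w y : H ⊗[k] H) :
    𝑺.lTensor H (mulOpFst k H w y) = 𝑺.lTensor H y * 𝑺.lTensor H w := by
  induction w with
  | zero => simp
  | tmul a b =>
    induction y with
    | zero => simp
    | tmul c d => simp [antipode_mul_antidistrib]
    | add y y' hy hy' => simp only [map_add, add_mul, hy, hy']
  | add w w' hw hw' => simp only [map_add, LinearMap.add_apply, mul_add, hw, hw']

lemma lTensor_antipode_mul (u v : H ⊗[k] H) :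
    𝑺.lTensor H (u * v) = mulOpFst k H (𝑺.lTensor H v) (𝑺.lTensor H u) := by
  induction u with
  | zero => simp
  | tmul a b =>
    induction v with
    | zero => simp
    | tmul c d => simp [antipode_mul_antidistrib]
    | add v v' hv hv' => simp only [map_add, mul_add, LinearMap.add_apply, hv, hv']
  | add u u' hu hu' => simp only [map_add, add_mul, hu, hu']

lemma swapT_apply (t : H ⊗[k] H) : swapT k H t = TensorProduct.comm k H H t := rfl

end Cartier

open Cartier

namespace QT

variable {k H} (Q : QT k H)

def unitR : (H ⊗[k] H)ˣ := ⟨Q.R, Q.Rinv, Q.mul_inv, Q.inv_mul⟩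

lemma counitLeft_R : counitLeft k H H Q.R = 1 := by
  have h := congrArg (counitLeft k H (H ⊗[k] H)) Q.hex2
  rw [counitLeft_comulId, map_mul, counitLeft_leg13, counitLeft_leg23] at h
  have h1 : (1 : H) ⊗ₜ[k] counitLeft k H H Q.R = 1 :=
    (Units.mul_left_inj Q.unitR).1 (h.symm.trans (one_mul _).symm)
  simpa using congrArg (counitLeft k H H) h1

lemma rTensor_antipode_R : 𝑺.rTensor H Q.R = Q.Rinv := by
  have h := congrArg (mulAntipode₁₂ k H) Q.hex2
  rw [mulAntipode₁₂_comulId, mulAntipode₁₂_leg13_mul_leg23, counitLeft_R,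
    ← Algebra.TensorProduct.one_def] at h
  exact (Q.unitR.inv_eq_of_mul_eq_one_right h.symm).symm

lemma eq_zero_of_conj_eq_zero {y : H ⊗[k] H} (h : Q.Rinv * y * Q.R = 0) : y = 0 :=
  (Units.mul_right_eq_zero Q.unitR⁻¹).1 ((Units.mul_left_eq_zero Q.unitR).1 h)

variable {Q}

lemma lTensor_antipode_Rinv (htri : Q.Rinv = swapT k H Q.R) : 𝑺.lTensor H Q.Rinv = Q.R := by
  rw [htri, swapT_apply, LinearMap.lTensor_comm, rTensor_antipode_R, htri, swapT_apply,
    TensorProduct.comm_comm]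

lemma map_antipode_antipode_Rinv (htri : Q.Rinv = swapT k H Q.R) :
    TensorProduct.map 𝑺 𝑺 Q.Rinv = Q.Rinv := by
  rw [htri, swapT_apply, TensorProduct.map_comm, ← LinearMap.lTensor_comp_rTensor,
    LinearMap.comp_apply, rTensor_antipode_R, lTensor_antipode_Rinv htri]

end QT

namespace PreCartier

variable {k H} (P : PreCartier k H)

lemma counitLeft_chi : counitLeft k H H P.χ = 0 := by
  have h := congrArg (counitLeft k H (H ⊗[k] H)) P.chi_hex2
  rw [counitLeft_comulId, map_add, map_mul, map_mul, counitLeft_leg23, counitLeft_leg23,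
    counitLeft_leg23, counitLeft_leg13] at h
  have h1 := P.eq_zero_of_conj_eq_zero (left_eq_add.1 h)
  simpa using congrArg (counitLeft k H H) h1

lemma counitRight_chi : counitRight k H H P.χ = 0 := by
  have h := congrArg (counitThird k H) P.chi_hex1
  rw [counitThird_idComul, map_add, map_mul, map_mul, counitThird_leg12, counitThird_leg12,
    counitThird_leg12, counitThird_leg13] at h
  have h1 := P.eq_zero_of_conj_eq_zero (left_eq_add.1 h)
  simpa using congrArg (counitRight k H H) h1

lemma rTensor_antipode_chi :
    𝑺.rTensor H P.χ = -mulOpFst k H (𝑺.rTensor H P.Rinv) (P.χ * P.Rinv) := by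
  have h := congrArg (mulAntipode₁₂ k H) P.chi_hex2
  rw [mulAntipode₁₂_comulId, counitLeft_chi, tmul_zero, map_add, mulAntipode₁₂_leg23, mul_assoc,
    mulAntipode₁₂_leg23_mul, mulAntipode₁₂_leg13_mul_leg23, P.rTensor_antipode_R] at h
  exact eq_neg_of_add_eq_zero_left h.symm

lemma mulOpFst_R_lTensor_antipode_chi :
    mulOpFst k H P.R (𝑺.lTensor H P.χ) = -(P.R * P.χ) := by
  have h := congrArg (mulAntipode₂₃ k H) P.chi_hex1
  rw [mulAntipode₂₃_idComul, counitRight_chi, zero_tmul, map_add, mulAntipode₂₃_leg12, mul_assoc,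
    mulAntipode₂₃_leg12_mul, mulAntipode₂₃_leg13_mul_leg12] at h
  rw [← mul_neg]
  exact (Units.inv_mul_eq_iff_eq_mul P.unitR).1 (eq_neg_of_add_eq_zero_right h.symm)

variable {P}

lemma map_antipode_antipode_chi (htri : P.Rinv = swapT k H P.R) :
    TensorProduct.map 𝑺 𝑺 P.χ = P.R * P.χ * P.Rinv := by
  calc TensorProduct.map 𝑺 𝑺 P.χ = 𝑺.lTensor H (𝑺.rTensor H P.χ) := by
        rw [← LinearMap.lTensor_comp_rTensor, LinearMap.comp_apply]
    _ = -(𝑺.lTensor H (P.χ * P.Rinv) * 𝑺.lTensor H (𝑺.rTensor H P.Rinv)) := by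
        rw [rTensor_antipode_chi, map_neg, lTensor_antipode_mulOpFst]
    _ = P.R * P.χ * P.Rinv := by
        rw [lTensor_antipode_mul, QT.lTensor_antipode_Rinv htri, mulOpFst_R_lTensor_antipode_chi,
          ← LinearMap.comp_apply, LinearMap.lTensor_comp_rTensor,
          QT.map_antipode_antipode_Rinv htri, neg_mul, neg_neg]

end PreCartier

/-- for a Cartier triangular Hopf algebra `(H,R,χ)`,
`τ(S⊗S)(χ) = χ`. -/
theorem cartier_triangular_SS_chi (P : PreCartier k H)
    (htri : P.Rinv = swapT k H P.R)
    (hCartier : P.R * P.χ = swapT k H P.χ * P.R) :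
    TensorProduct.comm k H H
      (TensorProduct.map (HopfAlgebra.antipode k : H →ₗ[k] H)
        (HopfAlgebra.antipode k : H →ₗ[k] H) P.χ) = P.χ := by
  have hχ : swapT k H P.χ = P.R * P.χ * P.Rinv := by
    rw [hCartier, mul_assoc, P.mul_inv, mul_one]
  have hRinv : swapT k H P.Rinv = P.R := by
    rw [htri, swapT_apply, swapT_apply, TensorProduct.comm_comm]
  calc TensorProduct.comm k H H (TensorProduct.map _ _ P.χ)
      = swapT k H (P.R * P.χ * P.Rinv) := by rw [PreCartier.map_antipode_antipode_chi htri]; rfl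
    _ = P.Rinv * (P.R * P.χ * P.Rinv) * P.R := by rw [map_mul, map_mul, hχ, hRinv, ← htri]
    _ = (P.Rinv * P.R) * P.χ * (P.Rinv * P.R) := by simp only [mul_assoc]
    _ = P.χ := by rw [P.inv_mul, one_mul, mul_one]

end
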